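/- Let n = sl_3(ℂ) with basis e1 = E12, e2 = E13, e3 = E21, e4 = E23, e5 = E31, e6 = E32, e7 = E11 − E22, e8 = E22 − E33 (where E_{ij} is the elementary matrix) and bracket {x, y} = xy − yx. Let φ be the linear map on sl_3(ℂ) determined by φ(e3) = −e3 − e7, φ(e4) = −e4 − e5, and φ(e_i) = 0 for i = 1, 2, 5, 6, 7, 8, and define the bilinear product x·y = {φ(x), y}. Then, with the bracket [x, y] := x·y − y·x + {x, y}, the pair (g, n) = ((sl_3(ℂ), [·,·]), sl_3(ℂ)) forms a pair of Lie algebras on the same vector space, x·y is a post-Lie algebra structure on (g, n), and g is isomorphic as a Lie algebra to aff_2(ℂ) ⊕ aff_1(ℂ). In particular, there exists a post-Lie algebra structure on a pair (g, n) with g complete non-semisimple and n simple. -/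

import Mathlib

noncomputable section

/-- A map `V → V → V` is ℂ-bilinear. -/
def IsBilin {V : Type*} [AddCommGroup V] [Module ℂ V] (f : V → V → V) : Prop :=
  (∀ (a : ℂ) (x y z : V), f (a • x + y) z = a • f x z + f y z) ∧
  (∀ (a : ℂ) (x y z : V), f x (a • y + z) = a • f x y + f x z)

/-- `f` is a Lie bracket on the complex vector space `V`. -/
def IsLieBracket {V : Type*} [AddCommGroup V] [Module ℂ V] (f : V → V → V) : Prop :=
  IsBilin f ∧ (∀ x, f x x = 0) ∧
  ∀ x y z, f x (f y z) + f y (f z x) + f z (f x y) = 0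

/-- `p` is a post-Lie algebra structure on the pair of Lie brackets `(g, n)` on `V`. -/
def IsPostLieStruct {V : Type*} [AddCommGroup V] [Module ℂ V]
    (g n p : V → V → V) : Prop :=
  IsBilin p ∧
  (∀ x y, p x y - p y x = g x y - n x y) ∧
  (∀ x y z, p (g x y) z = p x (p y z) - p y (p x z)) ∧
  (∀ x y z, p x (n y z) = n (p x y) z + n y (p x z))

/-- The Lie algebras `(V, g)` and `(W, h)` are isomorphic. -/
def LieBracketIso {V W : Type*} [AddCommGroup V] [Module ℂ V] [AddCommGroup W]
    [Module ℂ W] (g : V → V → V) (h : W → W → W) : Prop :=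
  ∃ e : V ≃ₗ[ℂ] W, ∀ x y, e (g x y) = h (e x) (e y)

/-- The bracket of `n = sl₃(ℂ)` on `ℂ⁸` in the basis
`e₁ = E₁₂, e₂ = E₁₃, e₃ = E₂₁, e₄ = E₂₃, e₅ = E₃₁, e₆ = E₃₂,
e₇ = E₁₁ - E₂₂, e₈ = E₂₂ - E₃₃` (coordinates `0, …, 7`), i.e. the structure
constants of `{x, y} = xy - yx` on `sl₃(ℂ)`. -/
def sl3Bracket (x y : Fin 8 → ℂ) : Fin 8 → ℂ :=
  let c : Fin 8 → Fin 8 → ℂ := fun i j => x i * y j - x j * y i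
  ![-2 * c 0 6 + c 0 7 + c 1 5,
    c 0 3 - c 1 6 - c 1 7,
    2 * c 2 6 - c 2 7 + c 3 4,
    -c 1 2 + c 3 6 - 2 * c 3 7,
    -c 2 5 + c 4 6 + c 4 7,
    -c 0 4 - c 5 6 + 2 * c 5 7,
    c 0 2 + c 1 4,
    c 1 4 + c 3 5]

/-- The linear map `φ` on `sl₃(ℂ)` determined by `φ(e₃) = -e₃ - e₇`,
`φ(e₄) = -e₄ - e₅`, and `φ(eᵢ) = 0` for `i = 1, 2, 5, 6, 7, 8`. -/
def sl3Phi (x : Fin 8 → ℂ) : Fin 8 → ℂ :=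
  ![0, 0, -x 2, -x 3, -x 3, 0, -x 2, 0]

/-- The product `x · y = {φ(x), y}`. -/
def sl3Product (x y : Fin 8 → ℂ) : Fin 8 → ℂ :=
  sl3Bracket (sl3Phi x) y

/-- The bracket `[x, y] := x · y - y · x + {x, y}` of `g`. -/
def gBracket (x y : Fin 8 → ℂ) : Fin 8 → ℂ :=
  sl3Product x y - sl3Product y x + sl3Bracket x y

/-- The bracket of `aff₂(ℂ) ⊕ aff₁(ℂ)` on `ℂ⁸` in the basis `(f₁, …, f₈)` with
`[f₁,f₂] = f₂`, `[f₁,f₃] = -f₃`, `[f₁,f₅] = f₅`, `[f₂,f₃] = f₁ - f₄`,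
`[f₂,f₄] = f₂`, `[f₂,f₆] = f₅`, `[f₃,f₄] = -f₃`, `[f₃,f₅] = f₆`, `[f₄,f₆] = f₆`,
`[f₇,f₈] = f₇`, where `(f₁, …, f₆)` is the standard basis
`(E₁₁, E₁₂, E₂₁, E₂₂, E₁₃, E₂₃)` of `aff₂(ℂ)` and `(f₇, f₈)` is a basis of
`aff₁(ℂ)`. -/
def aff2aff1Bracket (u v : Fin 8 → ℂ) : Fin 8 → ℂ :=
  let d : Fin 8 → Fin 8 → ℂ := fun i j => u i * v j - u j * v i
  ![d 1 2,
    d 0 1 + d 1 3,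
    -d 0 2 - d 2 3,
    -d 1 2,
    d 0 4 + d 1 5,
    d 2 4 + d 3 5,
    d 6 7,
    0]

/-! The map `φ` is a Rota–Baxter operator of weight one on `sl₃(ℂ)`: it carries
`[x, y] = {φ x, y} - {φ y, x} + {x, y}` to `{φ x, φ y}`. For any such `φ` on a Lie algebra
`(V, {·,·})`, the product `x · y = {φ x, y}` is post-Lie: axiom (3) is the Leibniz rule for
`ad (φ x)`, and axiom (2) reads `ad (φ [x, y]) = ad {φ x, φ y}`. The Jacobi identity for `[·,·]`
is free as well: `φ + id` also carries `[·,·]` to `{·,·}`, so the Jacobiator `J` of `[·,·]` equals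
`(φ + id) J - φ J`, a difference of two Jacobiators of `{·,·}`. The Rota–Baxter identity, the realization of
`{·,·}` as the commutator of traceless matrices and the isomorphism with `aff₂(ℂ) ⊕ aff₁(ℂ)`
are finite computations in coordinates. -/

section BracketAlgebra

variable {V W : Type*} [AddCommGroup V] [AddCommGroup W]

def jacobiator (f : V → V → V) (x y z : V) : V :=
  f x (f y z) + f y (f z x) + f z (f x y)

def rotaBaxterBracket (n : V → V → V) (φ : V → V) (x y : V) : V :=
  n (φ x) y - n (φ y) x + n x y

/-- The weight-one Rota–Baxter identity `{φ x, φ y} = φ ({φ x, y} + {x, φ y} + {x, y})`, written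
(via antisymmetry of `n`) as: `φ` maps the deformed bracket to `n`. -/
def IsRotaBaxter (n : V → V → V) (φ : V → V) : Prop :=
  ∀ x y, φ (rotaBaxterBracket n φ x y) = n (φ x) (φ y)

theorem map_jacobiator {g : V → V → V} {n : W → W → W} (φ : V →+ W)
    (hφ : ∀ x y, φ (g x y) = n (φ x) (φ y)) (x y z : V) :
    φ (jacobiator g x y z) = jacobiator n (φ x) (φ y) (φ z) := by
  simp only [jacobiator, map_add, hφ]

variable [Module ℂ V]

namespace IsBilin

variable {f h : V → V → V}

theorem add_left (hf : IsBilin f) (x y z : V) : f (x + y) z = f x z + f y z := by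
  simpa using hf.1 1 x y z

theorem add_right (hf : IsBilin f) (x y z : V) : f x (y + z) = f x y + f x z := by
  simpa using hf.2 1 x y z

theorem neg_right (hf : IsBilin f) (x y : V) : f x (-y) = -f x y := by
  have h0 : f x 0 = 0 := by simpa using hf.add_right x 0 0
  refine eq_neg_of_add_eq_zero_right ?_
  rw [← hf.add_right, add_neg_cancel, h0]

theorem add (hf : IsBilin f) (hh : IsBilin h) : IsBilin (fun x y => f x y + h x y) :=
  ⟨fun a x y z => by simp only [hf.1, hh.1]; module,
    fun a x y z => by simp only [hf.2, hh.2]; module⟩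

theorem sub (hf : IsBilin f) (hh : IsBilin h) : IsBilin (fun x y => f x y - h x y) :=
  ⟨fun a x y z => by simp only [hf.1, hh.1]; module,
    fun a x y z => by simp only [hf.2, hh.2]; module⟩

theorem flip (hf : IsBilin f) : IsBilin (fun x y => f y x) :=
  ⟨fun a x y z => hf.2 a z x y, fun a x y z => hf.1 a y z x⟩

theorem comp_left (hf : IsBilin f) (φ : V →ₗ[ℂ] V) : IsBilin (fun x y => f (φ x) y) :=
  ⟨fun a x y z => by simp only [map_add, map_smul, hf.1], fun a x y z => hf.2 a (φ x) y z⟩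

end IsBilin

namespace IsLieBracket

variable {n : V → V → V}

theorem swap (hn : IsLieBracket n) (x y : V) : n y x = -n x y := by
  refine eq_neg_of_add_eq_zero_right ?_
  have h := hn.2.1 (x + y)
  rwa [hn.1.add_left, hn.1.add_right, hn.1.add_right, hn.2.1, hn.2.1, zero_add, add_zero] at h

theorem jacobiator_eq_zero (hn : IsLieBracket n) (x y z : V) : jacobiator n x y z = 0 :=
  hn.2.2 x y z

theorem lie_lie (hn : IsLieBracket n) (x y z : V) :
    n (n x y) z = n x (n y z) - n y (n x z) := by
  have h := hn.jacobiator_eq_zero x y z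
  rw [jacobiator, hn.swap x z, hn.swap (n x y) z, hn.1.neg_right] at h
  linear_combination (norm := module) -h

theorem of_injective {L : Type*} [LieRing L] [LieAlgebra ℂ L] {f : V → V → V} (ι : V →ₗ[ℂ] L)
    (hι : Function.Injective ι) (hf : ∀ x y, ι (f x y) = ⁅ι x, ι y⁆) : IsLieBracket f :=
  ⟨⟨fun a x y z => hι (by simp [hf]), fun a x y z => hι (by simp [hf])⟩,
    fun x => hι (by simp [hf]), fun x y z => hι (by simp [hf, lie_jacobi])⟩

theorem map_add_id_rotaBaxterBracket (hn : IsLieBracket n) {φ : V →ₗ[ℂ] V}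
    (hφ : IsRotaBaxter n φ) (x y : V) :
    (φ + LinearMap.id : V →ₗ[ℂ] V) (rotaBaxterBracket n φ x y) =
      n ((φ + LinearMap.id : V →ₗ[ℂ] V) x) ((φ + LinearMap.id : V →ₗ[ℂ] V) y) := by
  simp only [LinearMap.add_apply, LinearMap.id_apply, hφ x y]
  simp only [rotaBaxterBracket, hn.1.add_left, hn.1.add_right, hn.swap (φ y) x]
  abel

theorem isPostLieStruct_of_isRotaBaxter (hn : IsLieBracket n) {φ : V →ₗ[ℂ] V}
    (hφ : IsRotaBaxter n φ) :
    IsPostLieStruct (rotaBaxterBracket n φ) n (fun x y => n (φ x) y) :=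
  ⟨hn.1.comp_left φ, fun x y => by simp only [rotaBaxterBracket, add_sub_cancel_right],
    fun x y z => by dsimp only; rw [hφ, hn.lie_lie],
    fun x y z => by dsimp only; rw [hn.lie_lie]; abel⟩

theorem isLieBracket_rotaBaxterBracket (hn : IsLieBracket n) {φ : V →ₗ[ℂ] V}
    (hφ : IsRotaBaxter n φ) : IsLieBracket (rotaBaxterBracket n φ) := by
  refine ⟨(hn.1.comp_left φ).sub (hn.1.comp_left φ).flip |>.add hn.1,
    fun x => by simp only [rotaBaxterBracket, sub_self, zero_add, hn.2.1], fun x y z => ?_⟩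
  have hψ := map_jacobiator (φ + LinearMap.id).toAddMonoidHom
    (hn.map_add_id_rotaBaxterBracket hφ) x y z
  have hφ' := map_jacobiator φ.toAddMonoidHom hφ x y z
  simp only [LinearMap.toAddMonoidHom_coe, hn.jacobiator_eq_zero, LinearMap.add_apply,
    LinearMap.id_apply] at hψ hφ'
  rwa [hφ', zero_add] at hψ

end IsLieBracket

end BracketAlgebra

def sl3PhiLinear : (Fin 8 → ℂ) →ₗ[ℂ] (Fin 8 → ℂ) where
  toFun := sl3Phi
  map_add' x y := by ext i; fin_cases i <;> simp [sl3Phi] <;> ring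
  map_smul' a x := by ext i; fin_cases i <;> simp [sl3Phi]

theorem isRotaBaxter_sl3Phi : IsRotaBaxter sl3Bracket sl3PhiLinear := by
  intro x y
  ext i
  fin_cases i <;> simp [sl3PhiLinear, sl3Phi, sl3Bracket, rotaBaxterBracket] <;> ring

attribute [local instance] LieRing.ofAssociativeRing

def sl3ToMatrix : (Fin 8 → ℂ) →ₗ[ℂ] Matrix (Fin 3) (Fin 3) ℂ where
  toFun x := !![x 6, x 0, x 1; x 2, x 7 - x 6, x 3; x 4, x 5, -x 7]
  map_add' x y := by ext i j; fin_cases i <;> fin_cases j <;> simp <;> ring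
  map_smul' a x := by ext i j; fin_cases i <;> fin_cases j <;> simp [mul_sub]

theorem sl3ToMatrix_injective : Function.Injective sl3ToMatrix :=
  Function.LeftInverse.injective
    (g := fun M => ![M 0 1, M 0 2, M 1 0, M 1 2, M 2 0, M 2 1, M 0 0, -M 2 2])
    fun x => by ext i; fin_cases i <;> simp [sl3ToMatrix]

theorem sl3ToMatrix_sl3Bracket (x y : Fin 8 → ℂ) :
    sl3ToMatrix (sl3Bracket x y) = ⁅sl3ToMatrix x, sl3ToMatrix y⁆ := by
  rw [Ring.lie_def]
  ext i j
  fin_cases i <;> fin_cases j <;> simp [sl3ToMatrix, sl3Bracket] <;> ring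

def gToAff2Aff1 : (Fin 8 → ℂ) ≃ₗ[ℂ] (Fin 8 → ℂ) where
  toFun x := ![-2 * x 2 + 2 * x 6 - x 7, x 1, -x 3 + x 4, -x 2 + x 6 - 2 * x 7,
    x 0, x 5, x 3, -x 2]
  invFun u := ![u 4, u 1, -u 7, u 6, u 2 + u 6, u 5,
    (2/3) * u 0 - (1/3) * u 3 - u 7, (1/3) * u 0 - (2/3) * u 3]
  map_add' x y := by ext i; fin_cases i <;> simp <;> ring
  map_smul' a x := by ext i; fin_cases i <;> simp <;> ring
  left_inv x := by ext i; fin_cases i <;> simp <;> ring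
  right_inv u := by ext i; fin_cases i <;> simp <;> ring

theorem gToAff2Aff1_gBracket (x y : Fin 8 → ℂ) :
    gToAff2Aff1 (gBracket x y) = aff2aff1Bracket (gToAff2Aff1 x) (gToAff2Aff1 y) := by
  ext i
  fin_cases i <;>
    simp [gToAff2Aff1, gBracket, sl3Product, sl3Phi, sl3Bracket, aff2aff1Bracket] <;> ring

theorem gBracket_eq_rotaBaxterBracket : gBracket = rotaBaxterBracket sl3Bracket sl3PhiLinear :=
  rfl

theorem sl3Product_eq : sl3Product = fun x y => sl3Bracket (sl3PhiLinear x) y :=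
  rfl

/-- Let `n = sl₃(ℂ)` with the basis `(e₁, …, e₈)` above, let `φ` be
the linear map with `φ(e₃) = -e₃ - e₇`, `φ(e₄) = -e₄ - e₅`, `φ(eᵢ) = 0` otherwise,
and set `x · y = {φ(x), y}` and `[x, y] := x · y - y · x + {x, y}`. Then `[·,·]` is a
Lie bracket, `(g, n) = ((ℂ⁸, [·,·]), sl₃(ℂ))` is a pair of Lie algebras on the same
vector space, `x · y` is a post-Lie algebra structure on `(g, n)`, and `g` is
isomorphic as a Lie algebra to `aff₂(ℂ) ⊕ aff₁(ℂ)`. (In particular there is a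
post-Lie algebra structure on a pair `(g, n)` with `g` complete non-semisimple and
`n` simple.) -/
theorem postLie_on_aff2aff1_sl3 :
    IsLieBracket sl3Bracket ∧ IsLieBracket gBracket ∧
    IsPostLieStruct gBracket sl3Bracket sl3Product ∧
    LieBracketIso gBracket aff2aff1Bracket := by
  have hn : IsLieBracket sl3Bracket :=
    .of_injective (L := Matrix (Fin 3) (Fin 3) ℂ) sl3ToMatrix sl3ToMatrix_injective
      sl3ToMatrix_sl3Bracket
  refine ⟨hn, ?_, ?_, gToAff2Aff1, gToAff2Aff1_gBracket⟩
  · rw [gBracket_eq_rotaBaxterBracket]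
    exact hn.isLieBracket_rotaBaxterBracket isRotaBaxter_sl3Phi
  · rw [gBracket_eq_rotaBaxterBracket, sl3Product_eq]
    exact hn.isPostLieStruct_of_isRotaBaxter isRotaBaxter_sl3Phi
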